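/- Let X, Y be independent nonnegative random variables with means m_X, m_Y > 0 and standard deviations σ_X, σ_Y. Define δ = m_X/m_Y, r = σ_X/σ_Y, c = σ_Y/m_Y. If δ > 2, 1 < r ≤ 2.5, and c ≤ 0.1·t for some t > 0, then P(X > Y) ≥ 1/(1 + 0.0725·t²). -/

import Mathlib

open MeasureTheory ProbabilityTheory

/-!
Cantelli's inequality applied to `X - Y`, whose mean is `m_X - m_Y > 0` and whose variance is
`σ_X² + σ_Y²` by independence, gives `P(X ≤ Y) ≤ V / (V + (m_X - m_Y)²)`. The hypotheses bound
`V = (r² + 1) c² m_Y² ≤ 7.25 · 0.01 t² m_Y²`, and `δ > 2` gives `m_Y ≤ m_X - m_Y`, so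
`V ≤ 0.0725 t² (m_X - m_Y)²`.
-/

namespace ProbabilityTheory

variable {Ω : Type*} {mΩ : MeasurableSpace Ω} {μ : Measure Ω} [IsProbabilityMeasure μ]
  {X Y : Ω → ℝ}

lemma integral_sq_eq_variance_add_sq (hX : MemLp X 2 μ) : μ[X ^ 2] = Var[X; μ] + μ[X] ^ 2 := by
  rw [variance_eq_sub hX]
  ring

/-- **Cantelli's inequality**, the one-sided Chebyshev inequality. -/
theorem measureReal_le_integral_sub_le (hX : MemLp X 2 μ) {t : ℝ} (ht : 0 < t) :
    μ.real {ω | X ω ≤ μ[X] - t} ≤ Var[X; μ] / (Var[X; μ] + t ^ 2) := by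
  set V := Var[X; μ]
  have hV : 0 ≤ V := variance_nonneg X μ
  -- Markov's inequality for `(u + μ[X] - X)²`, with the shift `u = V / t` that optimizes it
  set u := V / t
  set W : Ω → ℝ := fun ω ↦ (u + μ[X]) - X ω
  have hW : MemLp W 2 μ := (memLp_const _).sub hX
  have hWmean : μ[W] = u := by
    simp [W, integral_sub (integrable_const _) (hX.integrable one_le_two)]
  have hW2 : μ[W ^ 2] = V + u ^ 2 := by
    rw [integral_sq_eq_variance_add_sq hW, hWmean, variance_const_sub hX.1]
  have hsub : {ω | X ω ≤ μ[X] - t} ⊆ {ω | (u + t) ^ 2 ≤ (W ^ 2) ω} := by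
    intro ω hω
    simp only [Set.mem_ofPred_eq, Pi.pow_apply, W] at hω ⊢
    have hu : 0 ≤ u := by positivity
    nlinarith
  have hmarkov := mul_meas_ge_le_integral_of_nonneg
    (Filter.Eventually.of_forall fun ω ↦ sq_nonneg (W ω)) hW.integrable_sq ((u + t) ^ 2)
  have hpos : 0 < (u + t) ^ 2 := by positivity
  calc μ.real {ω | X ω ≤ μ[X] - t}
      ≤ μ.real {ω | (u + t) ^ 2 ≤ (W ^ 2) ω} := measureReal_mono hsub
    _ ≤ (V + u ^ 2) / (u + t) ^ 2 := by
        rw [le_div_iff₀ hpos, mul_comm, ← hW2]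
        exact hmarkov
    _ = V / (V + t ^ 2) := by
        simp only [u]
        field_simp
        ring

lemma IndepFun.variance_sub (hX : MemLp X 2 μ) (hY : MemLp Y 2 μ) (h : IndepFun X Y μ) :
    Var[X - Y; μ] = Var[X; μ] + Var[Y; μ] := by
  rw [ProbabilityTheory.variance_sub hX hY, h.covariance_eq_zero hX hY]
  ring

lemma IndepFun.measureReal_le_le (hX : MemLp X 2 μ) (hY : MemLp Y 2 μ) (h : IndepFun X Y μ)
    (hlt : μ[Y] < μ[X]) :
    μ.real {ω | X ω ≤ Y ω} ≤
      (Var[X; μ] + Var[Y; μ]) / (Var[X; μ] + Var[Y; μ] + (μ[X] - μ[Y]) ^ 2) := by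
  have hmean : μ[fun ω ↦ X ω - Y ω] = μ[X] - μ[Y] :=
    integral_sub (hX.integrable one_le_two) (hY.integrable one_le_two)
  have hcantelli := measureReal_le_integral_sub_le (hX.sub hY) (sub_pos.2 hlt)
  simp only [Pi.sub_apply, hmean, sub_self, sub_nonpos] at hcantelli
  rwa [h.variance_sub hX hY] at hcantelli

lemma IndepFun.one_div_one_add_le_measureReal_lt (hX : MemLp X 2 μ) (hY : MemLp Y 2 μ)
    (h : IndepFun X Y μ) (hlt : μ[Y] < μ[X]) {k : ℝ}
    (hk : Var[X; μ] + Var[Y; μ] ≤ k * (μ[X] - μ[Y]) ^ 2) :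
    1 / (1 + k) ≤ μ.real {ω | Y ω < X ω} := by
  set V := Var[X; μ] + Var[Y; μ]
  set m := μ[X] - μ[Y]
  have hm : 0 < m ^ 2 := by have := sub_pos.2 hlt; positivity
  have hV : 0 ≤ V := add_nonneg (variance_nonneg X μ) (variance_nonneg Y μ)
  have hk0 : 0 ≤ k := nonneg_of_mul_nonneg_left (hV.trans hk) hm
  have hcompl : μ.real {ω | Y ω < X ω} = 1 - μ.real {ω | X ω ≤ Y ω} := by
    rw [← probReal_compl_eq_one_sub₀]
    · simp only [Set.compl_ofPred, not_le]
    · exact nullMeasurableSet_le hX.aemeasurable hY.aemeasurable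
  have hVk : V / (V + m ^ 2) ≤ k / (1 + k) := by
    rw [div_le_div_iff₀ (by positivity) (by positivity)]
    nlinarith
  have hsum : 1 / (1 + k) = 1 - k / (1 + k) := by field_simp; ring
  rw [hcompl, hsum]
  linarith [h.measureReal_le_le hX hY hlt]

end ProbabilityTheory

theorem stmt2_general {Ω : Type*} [MeasurableSpace Ω] (P : Measure Ω) [IsProbabilityMeasure P]
    (X Y : Ω → ℝ) (hX : MemLp X 2 P) (hY : MemLp Y 2 P)
    (hind : IndepFun X Y P)
    (mX mY σX σY δ r c t : ℝ)
    (hmX : mX = P[X]) (hmY : mY = P[Y]) (hmYpos : 0 < mY)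
    (hσX : σX = Real.sqrt (variance X P)) (hσY : σY = Real.sqrt (variance Y P))
    (hδ : δ = mX / mY) (hr : r = σX / σY) (hc : c = σY / mY)
    (hδ2 : 2 < δ) (hr1 : 1 < r) (hr25 : r ≤ 2.5)
    (hct : c ≤ 0.1 * t) :
    (P {ω | X ω > Y ω}).toReal ≥ 1 / (1 + 0.0725 * t ^ 2) := by
  have hσY0 : σY ≠ 0 := by rintro h; simp [hr, h] at hr1; linarith
  have hgap : mY ≤ mX - mY := by
    rw [hδ, lt_div_iff₀ hmYpos] at hδ2
    linarith
  have hVX : variance X P = r ^ 2 * c ^ 2 * mY ^ 2 := by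
    rw [← Real.sq_sqrt (variance_nonneg X P), ← hσX, hr, hc]
    field_simp
  have hVY : variance Y P = c ^ 2 * mY ^ 2 := by
    rw [← Real.sq_sqrt (variance_nonneg Y P), ← hσY, hc]
    field_simp
  have hc0 : 0 ≤ c := by rw [hc, hσY]; positivity
  have hvar : variance X P + variance Y P ≤ 0.0725 * t ^ 2 * (P[X] - P[Y]) ^ 2 := by
    rw [hVX, hVY, ← hmX, ← hmY]
    have hr2 : r ^ 2 + 1 ≤ 7.25 := by nlinarith
    have hc2 : c ^ 2 ≤ 0.01 * t ^ 2 := by nlinarith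
    calc r ^ 2 * c ^ 2 * mY ^ 2 + c ^ 2 * mY ^ 2 = (r ^ 2 + 1) * c ^ 2 * mY ^ 2 := by ring
      _ ≤ 7.25 * (0.01 * t ^ 2) * (mX - mY) ^ 2 := by gcongr
      _ = 0.0725 * t ^ 2 * (mX - mY) ^ 2 := by ring
  have hlt : P[Y] < P[X] := by linarith
  exact hind.one_div_one_add_le_measureReal_lt hX hY hlt hvar

theorem stmt2 {Ω : Type*} [MeasurableSpace Ω] (P : Measure Ω) [IsProbabilityMeasure P]
    (X Y : Ω → ℝ) (hX : MemLp X 2 P) (hY : MemLp Y 2 P)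
    (hXnn : ∀ ω, 0 ≤ X ω) (hYnn : ∀ ω, 0 ≤ Y ω)
    (hind : IndepFun X Y P)
    (mX mY σX σY δ r c t : ℝ)
    (hmX : mX = P[X]) (hmY : mY = P[Y]) (hmXpos : 0 < mX) (hmYpos : 0 < mY)
    (hσX : σX = Real.sqrt (variance X P)) (hσY : σY = Real.sqrt (variance Y P))
    (hδ : δ = mX / mY) (hr : r = σX / σY) (hc : c = σY / mY)
    (hδ2 : 2 < δ) (hr1 : 1 < r) (hr25 : r ≤ 2.5)
    (ht : 0 < t) (hct : c ≤ 0.1 * t) :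
    (P {ω | X ω > Y ω}).toReal ≥ 1 / (1 + 0.0725 * t ^ 2) :=
  stmt2_general P X Y hX hY hind mX mY σX σY δ r c t hmX hmY hmYpos hσX hσY hδ hr hc hδ2 hr1 hr25
    hct
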